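/- Let A = (ℤ/2ℤ) × (ℤ ∗ ℤ/2ℤ) with factors ⟨α⟩ and ⟨β⟩ ∗ ⟨γ | γ²⟩, let B = (ℤ/2ℤ) × S₃ where S₃ = ⟨δ, γ′ | δ³ = γ′² = (γ′δ)² = 1⟩, and let C = (ℤ/2ℤ) × (ℤ/2ℤ) = ⟨α⟩ × ⟨γ⟩ be embedded in A in the obvious way and in B via α ↦ α and γ ↦ αγ′, i.e. γ maps to an order-2 element of the S₃ factor times α. Then A ∗_C B is isomorphic to (ℤ/2ℤ) × ⟨β, δ, γ | δ³ = γ² = (γδ)² = 1⟩. -/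

import Mathlib

open Monoid

abbrev M2 := Multiplicative (ZMod 2)
abbrev MZ := Multiplicative ℤ
/-- The symmetric group S₃, presented abstractly as ⟨δ, γ′ | δ³ = γ′² = (γ′δ)² = 1⟩. -/
abbrev S3 := Equiv.Perm (Fin 3)

/-- `A = (ℤ/2) × (ℤ ∗ ℤ/2)`, the factors generated by α and by β, γ. -/
abbrev A := M2 × Coprod MZ M2
/-- `B = (ℤ/2) × S₃`. -/
abbrev B := M2 × S3
/-- `C = ⟨α⟩ × ⟨γ⟩ = (ℤ/2) × (ℤ/2)`. -/
abbrev C := M2 × M2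

/-- The hom `ℤ/2 →* S₃` sending the generator to an order-2 element (= γ′). -/
def f : M2 →* S3 :=
  MonoidHom.mk' (fun a => if a = 1 then 1 else Equiv.swap 0 1) (by decide)

/-- `C ↪ A`:  α ↦ α in the first factor, γ ↦ γ in the ℤ/2 free factor. -/
def φA : C →* A := MonoidHom.prodMap (MonoidHom.id M2) Coprod.inr

/-- `C → B`:  α ↦ (α, 1), and γ ↦ (α, γ′), an order-2 element of the S₃ factor times α. -/
def φB : C →* B :=
  MonoidHom.prod ((MonoidHom.fst M2 M2) * (MonoidHom.snd M2 M2))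
    (f.comp (MonoidHom.snd M2 M2))

/-- The family `{A, B}` indexed by `Bool`. -/
def Gfam : Bool → Type := fun b => bif b then A else B

instance : ∀ b, Group (Gfam b) := fun b => by
  cases b
  · exact inferInstanceAs (Group B)
  · exact inferInstanceAs (Group A)

def φ : ∀ b, C →* Gfam b := fun b =>
  match b with
  | true => φA
  | false => φB

/-- Relators of ⟨β, δ, γ | δ³ = γ² = (γδ)² = 1⟩, with β = of 0, δ = of 1, γ = of 2. -/
def rels : Set (FreeGroup (Fin 3)) :=
  { (FreeGroup.of 1) ^ 3, (FreeGroup.of 2) ^ 2,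
    (FreeGroup.of 2 * FreeGroup.of 1) ^ 2 }

/- ############ auxiliary development ############ -/

namespace AmalgAux

section Dihedral

variable {G : Type*} [Group G]

lemma pow_mod3 (c : G) (hc : c ^ 3 = 1) (n : ℕ) : c ^ (n % 3) = c ^ n := by
  conv_rhs => rw [← Nat.div_add_mod n 3]
  rw [pow_add, pow_mul, hc, one_pow, one_mul]

lemma cp (c : G) (hc : c ^ 3 = 1) (i j : ZMod 3) :
    c ^ (i + j).val = c ^ i.val * c ^ j.val := by
  rw [ZMod.val_add, pow_mod3 c hc, pow_add]

lemma cinv (c : G) (hc : c ^ 3 = 1) (i : ZMod 3) : c ^ (-i).val = (c ^ i.val)⁻¹ := by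
  rw [eq_inv_iff_mul_eq_one, ← cp c hc, neg_add_cancel, ZMod.val_zero, pow_zero]

lemma cs_swap (c s : G) (key : s * c * s = c⁻¹) (hs : s * s = 1) (n : ℕ) :
    c ^ n * s = s * (c ^ n)⁻¹ := by
  induction n with
  | zero => simp
  | succ m ih =>
      have h1 : c * s = s * c⁻¹ := by
        rw [← key]
        rw [← mul_assoc, ← mul_assoc, hs, one_mul]
      rw [pow_succ, mul_assoc, h1, ← mul_assoc, ih, mul_assoc, ← mul_inv_rev,
        ((Commute.refl c).pow_right m).eq]

lemma cs_swap' (c s : G) (hc : c ^ 3 = 1) (key : s * c * s = c⁻¹) (hs : s * s = 1) (i : ZMod 3) :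
    c ^ i.val * s = s * c ^ (-i).val := by
  rw [cs_swap c s key hs, cinv c hc]

/-- Generic hom out of `DihedralGroup 3`. -/
def dih3Hom (c s : G) (hc : c ^ 3 = 1) (hs : s * s = 1) (key : s * c * s = c⁻¹) :
    DihedralGroup 3 →* G :=
  MonoidHom.mk' (fun x => match x with
    | .r i => c ^ i.val
    | .sr i => s * c ^ i.val) (by
      rintro (i | i) (j | j)
      · rw [DihedralGroup.r_mul_r]
        exact cp c hc i j
      · rw [DihedralGroup.r_mul_sr]
        show s * c ^ (j - i).val = c ^ i.val * (s * c ^ j.val)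
        rw [← mul_assoc, cs_swap' c s hc key hs, mul_assoc, ← cp c hc, neg_add_eq_sub]
      · rw [DihedralGroup.sr_mul_r]
        show s * c ^ (i + j).val = s * c ^ i.val * c ^ j.val
        rw [mul_assoc, ← cp c hc]
      · rw [DihedralGroup.sr_mul_sr]
        show c ^ (j - i).val = s * c ^ i.val * (s * c ^ j.val)
        rw [mul_assoc, ← mul_assoc (c ^ i.val), cs_swap' c s hc key hs, ← mul_assoc,
          ← mul_assoc, hs, one_mul, ← cp c hc, neg_add_eq_sub])

@[simp] lemma dih3Hom_r (c s : G) (hc hs key) (i : ZMod 3) :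
    dih3Hom c s hc hs key (.r i) = c ^ i.val := rfl

@[simp] lemma dih3Hom_sr (c s : G) (hc hs key) (i : ZMod 3) :
    dih3Hom c s hc hs key (.sr i) = s * c ^ i.val := rfl

lemma dih3_hom_ext {H : Type*} [Monoid H] {h₁ h₂ : DihedralGroup 3 →* H}
    (h1 : h₁ (.r 1) = h₂ (.r 1)) (h2 : h₁ (.sr 0) = h₂ (.sr 0)) : h₁ = h₂ := by
  have hr : ∀ i : ZMod 3, h₁ (.r i) = h₂ (.r i) := by
    intro i
    have : (DihedralGroup.r i : DihedralGroup 3) = (DihedralGroup.r 1) ^ i.val := by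
      rw [DihedralGroup.r_one_pow, ZMod.natCast_val, ZMod.cast_id]
    rw [this, map_pow, map_pow, h1]
  ext x
  rcases x with i | i
  · exact hr i
  · have : (DihedralGroup.sr i : DihedralGroup 3) = (DihedralGroup.sr 0) * .r i := by
      rw [DihedralGroup.sr_mul_r, zero_add]
    rw [this, map_mul, map_mul, h2, hr i]

/-- Generic hom out of `M2`. -/
def homM2 (x : G) (hx : x * x = 1) : M2 →* G :=
  MonoidHom.mk' (fun a => if a = 1 then 1 else x) (by
    intro a b
    by_cases ha : a = 1
    · simp [ha]
    · by_cases hb : b = 1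
      · simp [hb]
      · have hab : a * b = 1 := by revert ha hb; revert a b; decide
        simp [ha, hb, hab, hx.symm])

@[simp] lemma homM2_one (x : G) (hx) : homM2 x hx 1 = 1 := rfl

@[simp] lemma homM2_α (x : G) (hx) : homM2 x hx (Multiplicative.ofAdd 1) = x := by
  have : (Multiplicative.ofAdd (1 : ZMod 2)) ≠ 1 := by decide
  simp [homM2, MonoidHom.mk', this]

end Dihedral

/-! Concrete generators. -/

notation "αm" => (Multiplicative.ofAdd (1 : ZMod 2) : M2)

def βz : MZ := Multiplicative.ofAdd (1 : ℤ)

def c0 : S3 := Equiv.swap 0 1 * Equiv.swap 1 2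
def s0 : S3 := Equiv.swap 0 1

lemma hc0 : c0 ^ 3 = 1 := by decide
lemma hs0 : s0 * s0 = 1 := by decide
lemma key0 : s0 * c0 * s0 = c0⁻¹ := by decide

abbrev P := PresentedGroup rels

def pβ : P := PresentedGroup.of 0
def pδ : P := PresentedGroup.of 1
def pγ : P := PresentedGroup.of 2

lemma rel_mk {r : FreeGroup (Fin 3)} (hr : r ∈ rels) : PresentedGroup.mk rels r = 1 :=
  (QuotientGroup.eq_one_iff _).2 (Subgroup.subset_normalClosure hr)

lemma hpδ : pδ ^ 3 = 1 := by
  have := rel_mk (r := (FreeGroup.of 1) ^ 3) (by simp [rels])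
  rw [map_pow] at this
  exact this

lemma hpγ : pγ * pγ = 1 := by
  have := rel_mk (r := (FreeGroup.of 2) ^ 2) (by simp [rels])
  rw [← pow_two]
  rw [map_pow] at this
  exact this

lemma keyp : pγ * pδ * pγ = pδ⁻¹ := by
  have h : (pγ * pδ) * (pγ * pδ) = 1 := by
    have := rel_mk (r := (FreeGroup.of 2 * FreeGroup.of 1) ^ 2) (by simp [rels])
    rw [← pow_two]
    rw [map_pow, map_mul] at this
    exact this
  rw [eq_inv_iff_mul_eq_one]
  calc pγ * pδ * pγ * pδ = (pγ * pδ) * (pγ * pδ) := by group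
  _ = 1 := h

/-- `DihedralGroup 3 ≃* S3`. -/
def d : DihedralGroup 3 →* S3 := dih3Hom c0 s0 hc0 hs0 key0

lemma hd : Function.Bijective d := by decide

noncomputable def e : DihedralGroup 3 ≃* S3 := MulEquiv.ofBijective d hd

lemma e_apply (x : DihedralGroup 3) : e x = d x := rfl

lemma e_symm_c0 : e.symm c0 = .r 1 := by
  rw [MulEquiv.symm_apply_eq, e_apply]
  show c0 = c0 ^ (1 : ZMod 3).val
  rw [ZMod.val_one, pow_one]

lemma e_symm_s0 : e.symm s0 = .sr 0 := by
  rw [MulEquiv.symm_apply_eq, e_apply]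
  show s0 = s0 * c0 ^ (0 : ZMod 3).val
  norm_num

/-- hom `S3 →* P` with δ-cycle ↦ pδ, transposition `s0` ↦ pγ. -/
noncomputable def θ : S3 →* P :=
  (dih3Hom pδ pγ hpδ hpγ keyp).comp e.symm.toMonoidHom

lemma θ_c0 : θ c0 = pδ := by
  show dih3Hom pδ pγ hpδ hpγ keyp (e.symm c0) = pδ
  rw [e_symm_c0, dih3Hom_r, ZMod.val_one, pow_one]

lemma θ_s0 : θ s0 = pγ := by
  show dih3Hom pδ pγ hpδ hpγ keyp (e.symm s0) = pγ
  rw [e_symm_s0, dih3Hom_sr]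
  norm_num

/-- the sign hom `S3 →* M2`. -/
def sgn : S3 →* M2 :=
  MonoidHom.mk' (fun σ => if Equiv.Perm.sign σ = 1 then 1 else αm) (by decide)

lemma sgn_c0 : sgn c0 = 1 := by decide
lemma sgn_s0 : sgn s0 = αm := by decide

/-! Forward map. -/

abbrev T := M2 × P

noncomputable def ψ : Coprod MZ M2 →* P :=
  Coprod.lift (zpowersHom P pβ) (homM2 pγ hpγ)

noncomputable def fA : A →* T := (MonoidHom.id M2).prodMap ψ

noncomputable def fB : B →* T :=
  MonoidHom.prod ((MonoidHom.fst M2 S3) * (sgn.comp (MonoidHom.snd M2 S3)))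
    (θ.comp (MonoidHom.snd M2 S3))

lemma fA_apply (a : M2) (w : Coprod MZ M2) : fA (a, w) = (a, ψ w) := rfl

lemma fB_apply (a : M2) (σ : S3) : fB (a, σ) = (a * sgn σ, θ σ) := rfl

noncomputable def k : C →* T := fA.comp φA

noncomputable def Ffam : ∀ b, Gfam b →* T := fun b =>
  match b with
  | true => fA
  | false => fB

lemma m2cases (b : M2) : b = 1 ∨ b = αm := by revert b; decide

lemma f_one : f 1 = 1 := rfl
lemma f_α : f αm = s0 := by decide

lemma φB_apply (a b : M2) : φB (a, b) = (a * b, f b) := rfl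
lemma φA_apply (a b : M2) : φA (a, b) = (a, Coprod.inr b) := rfl

lemma ψ_inr (b : M2) : ψ (Coprod.inr b) = homM2 pγ hpγ b := by
  simp [ψ]

lemma ψ_inl (m : MZ) : ψ (Coprod.inl m) = pβ ^ m.toAdd := by
  simp [ψ, zpowersHom_apply]

lemma hcompat : ∀ b, (Ffam b).comp (φ b) = k := by
  intro b
  cases b
  · -- false : fB.comp φB = fA.comp φA
    show fB.comp φB = k
    refine MonoidHom.ext fun x => ?_
    obtain ⟨a, b⟩ := x
    rcases m2cases b with hb | hb <;> subst hb <;>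
      simp only [MonoidHom.comp_apply, φB_apply, φA_apply, fA_apply, fB_apply, k, f_one, f_α]
    · simp [ψ_inr]
    · rw [ψ_inr, homM2_α, sgn_s0, θ_s0]
      have : a * αm * αm = a := by
        rcases m2cases a with ha | ha <;> subst ha <;> decide
      rw [this]
  · rfl

noncomputable def F : PushoutI φ →* T := PushoutI.lift Ffam k hcompat

lemma F_ofA (g : A) : F (PushoutI.of (φ := φ) true g) = fA g :=
  PushoutI.lift_of _ _ _ _

lemma F_ofB (g : B) : F (PushoutI.of (φ := φ) false g) = fB g :=
  PushoutI.lift_of _ _ _ _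

/-! Backward map. -/

abbrev PG := PushoutI φ

def x0 : PG := PushoutI.of (φ := φ) true ((αm, 1) : A)

lemma hx0 : x0 * x0 = 1 := by
  rw [x0]
  erw [← map_mul]
  have : ((αm, 1) : A) * (αm, 1) = 1 := by
    rw [Prod.mk_mul_mk, Prod.mk_eq_one]
    exact ⟨by decide, one_mul 1⟩
  erw [this, map_one]

lemma ofA_φ (x : C) : PushoutI.of (φ := φ) true (φA x) = PushoutI.base φ x :=
  PushoutI.of_apply_eq_base φ true x

lemma ofB_φ (x : C) : PushoutI.of (φ := φ) false (φB x) = PushoutI.base φ x :=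
  PushoutI.of_apply_eq_base φ false x

lemma x0_base : x0 = PushoutI.base φ ((αm, αm * αm) : C) := by
  rw [← ofA_φ]
  show PushoutI.of (φ := φ) true ((αm, 1) : A) = PushoutI.of (φ := φ) true (φA (αm, αm * αm))
  have : φA ((αm, αm * αm) : C) = ((αm, 1) : A) := by
    rw [φA_apply, show (αm * αm : M2) = 1 by decide]
    exact congrArg _ (map_one Coprod.inr)
  rw [this]

lemma x0_B : x0 = PushoutI.of (φ := φ) false ((αm, 1) : B) := by
  rw [x0_base, ← ofB_φ]
  have : φB ((αm, αm * αm) : C) = ((αm, 1) : B) := by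
    rw [φB_apply, show (αm * αm : M2) = 1 by decide, f_one, mul_one]
  rw [this]

def hα : M2 →* PG := homM2 x0 hx0

/-- images of the three generators. -/
noncomputable def gen : Fin 3 → PG :=
  ![PushoutI.of (φ := φ) true ((1, Coprod.inl βz) : A),
    PushoutI.of (φ := φ) false ((1, c0) : B),
    PushoutI.of (φ := φ) true ((1, Coprod.inr αm) : A)]

lemma gen2_eq : gen 2 = PushoutI.of (φ := φ) false ((αm, s0) : B) := by
  show PushoutI.of (φ := φ) true ((1, Coprod.inr αm) : A) = _
  have h1 : ((1, Coprod.inr αm) : A) = φA (1, αm) := by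
    rw [φA_apply]
  have h2 : φB ((1, αm) : C) = ((αm, s0) : B) := by
    rw [φB_apply, f_α, one_mul]
  rw [h1, ofA_φ, ← ofB_φ, h2]

lemma hrels : ∀ r ∈ rels, FreeGroup.lift gen r = 1 := by
  intro r hr
  rcases hr with h | h | h
  · subst h
    rw [map_pow, FreeGroup.lift_apply_of]
    show (gen 1) ^ 3 = 1
    rw [show gen 1 = PushoutI.of (φ := φ) false ((1, c0) : B) from rfl]
    erw [← map_pow]
    have : ((1, c0) : B) ^ 3 = 1 := by
      rw [Prod.pow_mk, Prod.mk_eq_one]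
      exact ⟨one_pow 3, hc0⟩
    erw [this, map_one]
  · subst h
    rw [map_pow, FreeGroup.lift_apply_of]
    show (gen 2) ^ 2 = 1
    rw [gen2_eq]
    erw [← map_pow]
    have : ((αm, s0) : B) ^ 2 = 1 := by
      rw [Prod.pow_mk, Prod.mk_eq_one]
      exact ⟨by decide, by rw [pow_two]; exact hs0⟩
    erw [this, map_one]
  · simp only [Set.mem_singleton_iff] at h
    subst h
    rw [map_pow, map_mul, FreeGroup.lift_apply_of, FreeGroup.lift_apply_of]
    show (gen 2 * gen 1) ^ 2 = 1
    rw [gen2_eq, show gen 1 = PushoutI.of (φ := φ) false ((1, c0) : B) from rfl]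
    erw [← map_mul,
      ← map_pow]
    have : (((αm, s0) : B) * (1, c0)) ^ 2 = 1 := by
      rw [Prod.mk_mul_mk, mul_one, Prod.pow_mk, Prod.mk_eq_one]
      exact ⟨by decide, by decide⟩
    erw [this, map_one]

noncomputable def hP : P →* PG := PresentedGroup.toGroup hrels

lemma hP_of (i : Fin 3) : hP (PresentedGroup.of i) = gen i := PresentedGroup.toGroup.of hrels

/-- `x0` is central. -/
lemma x0_central (g : PG) : x0 * g = g * x0 := by
  have key : (MulAut.conj x0).toMonoidHom = MonoidHom.id PG := by
    apply PushoutI.hom_ext_nonempty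
    intro b
    cases b
    · refine MonoidHom.ext fun g => ?_
      obtain ⟨a, σ⟩ := g
      show x0 * PushoutI.of (φ := φ) false (a, σ) * x0⁻¹ = PushoutI.of (φ := φ) false (a, σ)
      rw [x0_B]
      erw [← map_inv, ← map_mul, ← map_mul]
      congr 1
      show ((αm, 1) : B) * (a, σ) * ((αm, 1) : B)⁻¹ = (a, σ)
      rw [Prod.inv_mk, Prod.mk_mul_mk, Prod.mk_mul_mk, Prod.mk.injEq]
      constructor
      · rw [mul_comm αm a, mul_assoc, mul_inv_cancel, mul_one]
      · rw [one_mul, inv_one, mul_one]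
    · refine MonoidHom.ext fun g => ?_
      obtain ⟨a, w⟩ := g
      show x0 * PushoutI.of (φ := φ) true (a, w) * x0⁻¹ = PushoutI.of (φ := φ) true (a, w)
      rw [x0]
      erw [← map_inv, ← map_mul, ← map_mul]
      congr 1
      show ((αm, 1) : A) * (a, w) * ((αm, 1) : A)⁻¹ = (a, w)
      rw [Prod.inv_mk, Prod.mk_mul_mk, Prod.mk_mul_mk, Prod.mk.injEq]
      constructor
      · rw [mul_comm αm a, mul_assoc, mul_inv_cancel, mul_one]
      · rw [one_mul, inv_one, mul_one]
  have := DFunLike.congr_fun key g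
  simp only [MulEquiv.toMonoidHom_eq_coe, MonoidHom.coe_coe, MulAut.conj_apply,
    MonoidHom.id_apply] at this
  calc x0 * g = x0 * g * x0⁻¹ * x0 := by group
  _ = g * x0 := by rw [this]

lemma comm : ∀ (a : M2) (p : P), Commute (hα a) (hP p) := by
  intro a p
  rcases m2cases a with ha | ha <;> subst ha
  · rw [map_one]; exact Commute.one_left _
  · show hα αm * hP p = hP p * hα αm
    rw [show hα αm = x0 from homM2_α x0 hx0, x0_central]

noncomputable def Gm : T →* PG := hα.noncommCoprod hP comm

lemma Gm_apply (a : M2) (p : P) : Gm (a, p) = hα a * hP p := rfl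


lemma e_r1 : e (DihedralGroup.r 1) = c0 := by
  rw [e_apply]
  show c0 ^ (1 : ZMod 3).val = c0
  rw [ZMod.val_one, pow_one]

lemma e_sr0 : e (DihedralGroup.sr 0) = s0 := by
  rw [e_apply]
  show s0 * c0 ^ (0 : ZMod 3).val = s0
  rw [ZMod.val_zero, pow_zero, mul_one]

lemma hα_α : hα αm = x0 := homM2_α x0 hx0

lemma F_hP (i : Fin 3) : F (hP (PresentedGroup.of i)) = (1, PresentedGroup.of i) := by
  fin_cases i
  · rw [hP_of]
    show F (PushoutI.of (φ := φ) true ((1, Coprod.inl βz) : A)) = (1, pβ)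
    rw [F_ofA, fA_apply, ψ_inl]
    show ((1 : M2), pβ ^ (1 : ℤ)) = (1, pβ)
    rw [zpow_one]
  · rw [hP_of]
    show F (PushoutI.of (φ := φ) false ((1, c0) : B)) = (1, pδ)
    rw [F_ofB, fB_apply, sgn_c0, θ_c0, mul_one]
  · rw [hP_of]
    show F (PushoutI.of (φ := φ) true ((1, Coprod.inr αm) : A)) = (1, pγ)
    rw [F_ofA, fA_apply, ψ_inr, homM2_α]

lemma FG : F.comp Gm = MonoidHom.id T := by
  refine MonoidHom.ext fun x => ?_
  obtain ⟨a, p⟩ := x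
  have h1 : F (Gm ((a, 1) : T)) = ((a, 1) : T) := by
    rw [Gm_apply, map_one hP, mul_one]
    rcases m2cases a with h | h <;> subst h
    · rw [map_one hα, map_one F]; rfl
    · rw [hα_α, x0, F_ofA, fA_apply, map_one ψ]
  have h2 : F (Gm ((1, p) : T)) = ((1, p) : T) := by
    rw [Gm_apply, map_one hα, one_mul]
    have key : F.comp hP = MonoidHom.inr M2 P := by
      apply PresentedGroup.ext
      intro i
      rw [MonoidHom.comp_apply, MonoidHom.inr_apply]
      exact F_hP i
    exact DFunLike.congr_fun key p
  have hsplit : ((a, p) : T) = (a, 1) * (1, p) := by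
    rw [Prod.mk_mul_mk, mul_one, one_mul]
  rw [MonoidHom.comp_apply, MonoidHom.id_apply, hsplit, map_mul, map_mul, h1, h2]

lemma GF_A1 (a : M2) :
    Gm (F (PushoutI.of (φ := φ) true ((a, 1) : A))) = PushoutI.of (φ := φ) true ((a, 1) : A) := by
  rcases m2cases a with h | h <;> subst h
  · have h0 : ((1, 1) : A) = 1 := rfl
    erw [h0, map_one, map_one]
  · rw [F_ofA, fA_apply, map_one ψ, Gm_apply, map_one hP, mul_one, hα_α, x0]

lemma GF_B1 (a : M2) :
    Gm (F (PushoutI.of (φ := φ) false ((a, 1) : B))) =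
      PushoutI.of (φ := φ) false ((a, 1) : B) := by
  rcases m2cases a with h | h <;> subst h
  · have h0 : ((1, 1) : B) = 1 := rfl
    erw [h0, map_one, map_one]
  · rw [F_ofB, fB_apply, map_one sgn, mul_one, map_one θ, Gm_apply, map_one hP, mul_one, hα_α,
      x0_B]

lemma GF_B2 (σ : S3) :
    Gm (F (PushoutI.of (φ := φ) false ((1, σ) : B))) =
      PushoutI.of (φ := φ) false ((1, σ) : B) := by
  have key : (((Gm.comp F).comp (PushoutI.of (φ := φ) false)).comp
        (MonoidHom.inr M2 S3)) =
      ((PushoutI.of (φ := φ) false).comp (MonoidHom.inr M2 S3)) := by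
    refine (MonoidHom.cancel_right (f := e.toMonoidHom) e.surjective).mp ?_
    apply dih3_hom_ext <;>
      simp only [MonoidHom.comp_apply, MulEquiv.coe_toMonoidHom, MonoidHom.inr_apply]
    · rw [e_r1]
      show Gm (F (PushoutI.of (φ := φ) false ((1, c0) : B))) =
        PushoutI.of (φ := φ) false ((1, c0) : B)
      rw [F_ofB, fB_apply, sgn_c0, θ_c0, mul_one, Gm_apply, map_one hα, one_mul]
      exact hP_of 1
    · rw [e_sr0]
      show Gm (F (PushoutI.of (φ := φ) false ((1, s0) : B))) =
        PushoutI.of (φ := φ) false ((1, s0) : B)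
      rw [F_ofB, fB_apply, sgn_s0, θ_s0, one_mul, Gm_apply, hα_α]
      rw [show hP pγ = gen 2 from hP_of 2, gen2_eq, x0_B]
      erw [← map_mul]
      have : ((αm, 1) : B) * (αm, s0) = (1, s0) := by
        rw [Prod.mk_mul_mk, one_mul, show (αm * αm : M2) = 1 by decide]
      erw [this]
  exact DFunLike.congr_fun key σ

lemma GF_A2 (w : Coprod MZ M2) :
    Gm (F (PushoutI.of (φ := φ) true ((1, w) : A))) =
      PushoutI.of (φ := φ) true ((1, w) : A) := by
  have key : (((Gm.comp F).comp (PushoutI.of (φ := φ) true)).comp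
        (MonoidHom.inr M2 (Coprod MZ M2))) =
      ((PushoutI.of (φ := φ) true).comp (MonoidHom.inr M2 (Coprod MZ M2))) := by
    apply Coprod.hom_ext
    · apply MonoidHom.ext_mint
      simp only [MonoidHom.comp_apply]
      show Gm (F (PushoutI.of (φ := φ) true ((1, Coprod.inl βz) : A))) =
        PushoutI.of (φ := φ) true ((1, Coprod.inl βz) : A)
      rw [F_ofA, fA_apply, ψ_inl]
      rw [show pβ ^ (Multiplicative.toAdd βz) = pβ from zpow_one pβ]
      rw [Gm_apply, map_one hα, one_mul]
      exact hP_of 0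
    · refine MonoidHom.ext fun b => ?_
      rcases m2cases b with h | h <;> subst h
      · rw [map_one, map_one]
      · simp only [MonoidHom.comp_apply]
        show Gm (F (PushoutI.of (φ := φ) true ((1, Coprod.inr αm) : A))) =
          PushoutI.of (φ := φ) true ((1, Coprod.inr αm) : A)
        rw [F_ofA, fA_apply, ψ_inr, homM2_α, Gm_apply, map_one hα, one_mul]
        exact hP_of 2
  exact DFunLike.congr_fun key w

lemma GF : Gm.comp F = MonoidHom.id PG := by
  apply PushoutI.hom_ext_nonempty
  intro b
  cases b
  · refine MonoidHom.ext fun g => ?_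
    obtain ⟨a, σ⟩ := g
    have hsplit : ((a, σ) : B) = (a, 1) * (1, σ) := by
      rw [Prod.mk_mul_mk, mul_one, one_mul]
    show Gm (F (PushoutI.of (φ := φ) false (a, σ))) = PushoutI.of (φ := φ) false (a, σ)
    rw [hsplit]
    erw [map_mul (PushoutI.of (φ := φ) false)]
    rw [map_mul, map_mul, GF_B1, GF_B2]
  · refine MonoidHom.ext fun g => ?_
    obtain ⟨a, w⟩ := g
    have hsplit : ((a, w) : A) = (a, 1) * (1, w) := by
      rw [Prod.mk_mul_mk, mul_one, one_mul]
    show Gm (F (PushoutI.of (φ := φ) true (a, w))) = PushoutI.of (φ := φ) true (a, w)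
    rw [hsplit]
    erw [map_mul (PushoutI.of (φ := φ) true)]
    rw [map_mul, map_mul, GF_A1, GF_A2]

end AmalgAux

/-- `A ∗_C B ≅ (ℤ/2) × ⟨β, δ, γ | δ³ = γ² = (γδ)² = 1⟩`. -/
theorem amalgam_iso :
    Nonempty (Monoid.PushoutI φ ≃* M2 × PresentedGroup rels) := by
  exact ⟨AmalgAux.F.toMulEquiv AmalgAux.Gm AmalgAux.GF AmalgAux.FG⟩
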